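/- Let X be an odd or even involutive FL_e-chain, and let u ≤ v be positive idempotents of X. Then the map ς_{u→v}(x) = v·x maps G_u into G_v, preserves the layer-group units, products, inverses and order (i.e. ς_{u→v} is an o-group homomorphism from the layer group G_u to the layer group G_v); moreover ς_{u→u} is the identity on G_u, ς_{v→w} ∘ ς_{u→v} = ς_{u→w} for u ≤ v ≤ w, and if u < v and v' is idempotent then ς_{u→v} maps G_u into H_v. -/
import Mathlib


open Classical

universe u v

/-- An FL_e-chain: a totally ordered commutative monoid with a residuation operation
`imp` (so that `x * y ≤ z ↔ y ≤ imp x z`) and a falsum constant `fc`.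
The monoid unit `1` plays the role of the constant `t`. -/
class FLeChain (X : Type u) extends LinearOrder X, CommMonoid X where
  imp : X → X → X
  fc : X
  residuation : ∀ x y z : X, x * y ≤ z ↔ y ≤ imp x z

namespace FLe

variable {X : Type u}

/-- The residual `x → y`. -/
def imp [FLeChain X] (x y : X) : X := FLeChain.imp x y

/-- The falsum constant `f`. -/
def fc (X : Type u) [FLeChain X] : X := FLeChain.fc

/-- The residual complement `x' = x → f`. -/
def compl [FLeChain X] (x : X) : X := imp x (fc X)

/-- An FL_e-chain is involutive if `x'' = x` for all `x`. -/
def Involutive (X : Type u) [FLeChain X] : Prop := ∀ x : X, compl (compl x) = x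

/-- An involutive FL_e-chain is odd if `t' = t`. -/
def OddChain (X : Type u) [FLeChain X] : Prop := compl (1 : X) = 1

/-- An involutive FL_e-chain is even if `x < t ↔ x ≤ f` for all `x`. -/
def EvenChain (X : Type u) [FLeChain X] : Prop := ∀ x : X, x < 1 ↔ x ≤ fc X

/-- Odd or even involutive FL_e-chain. -/
def OddEven (X : Type u) [FLeChain X] : Prop := Involutive X ∧ (OddChain X ∨ EvenChain X)

/-- `x` is idempotent. -/
def IsIdem [Mul X] (x : X) : Prop := x * x = x

/-- Homomorphisms of FL_e-chains: order preserving, multiplicative, residual preserving,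
and preserving both constants. -/
def IsFLeHom (X : Type u) (Y : Type v) [FLeChain X] [FLeChain Y] (φ : X → Y) : Prop :=
  Monotone φ ∧ (∀ a b : X, φ (a * b) = φ a * φ b) ∧
    (∀ a b : X, φ (imp a b) = imp (φ a) (φ b)) ∧ φ (1 : X) = 1 ∧ φ (fc X) = fc Y

/-- The skeleton `κ`: the set of positive idempotent elements. -/
def kappa (X : Type u) [FLeChain X] : Set X := {u : X | 1 ≤ u ∧ IsIdem u}

/-- `κ_o`: it is `{t}` if the chain is odd, empty otherwise. -/
def kappaO (X : Type u) [FLeChain X] : Set X := {u : X | u = 1 ∧ OddChain X}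

/-- The layer `L_u = {x : x → x = u}`. -/
def layer [FLeChain X] (u : X) : Set X := {x : X | imp x x = u}

/-- `H_u = {x ∈ L_u : x · u' < x}`, the set of `u`-invertible elements of the layer. -/
def Hs [FLeChain X] (u : X) : Set X := {x : X | x ∈ layer u ∧ x * compl u < x}

/-- The dotted copy `•H_u = {x · u' : x ∈ H_u}`. -/
def dotH [FLeChain X] (u : X) : Set X := (fun x => x * compl u) '' Hs u

/-- `u ∈ κ_I`: a positive idempotent whose complement is idempotent, not in `κ_o`. -/
def inKI [FLeChain X] (u : X) : Prop := u ∈ kappa X ∧ IsIdem (compl u) ∧ u ∉ kappaO X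

/-- `u ∈ κ_J`: a positive idempotent whose complement is not idempotent. -/
def inKJ [FLeChain X] (u : X) : Prop := u ∈ kappa X ∧ ¬ IsIdem (compl u)

/-- The layer group carrier: `G_u = L_u \ •H_u` if `u ∈ κ_I`, and `G_u = L_u` otherwise. -/
def Gs [FLeChain X] (u : X) : Set X := {x : X | x ∈ layer u ∧ (inKI u → x ∉ dotH u)}

/-- The layer group multiplication: `x ·_u y = ((x·y)→u)→u` if `u ∈ κ_I`, `x·y` otherwise. -/
noncomputable def gmul [FLeChain X] (u x y : X) : X :=
  if inKI u then imp (imp (x * y) u) u else x * y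

/-- The layer group inversion `x^{-1_u} = x → u`. -/
def ginv [FLeChain X] (u x : X) : X := imp x u

/-- The union of all layer group carriers. -/
def GX (X : Type u) [FLeChain X] : Set X := ⋃ u ∈ kappa X, Gs u

end FLe

open FLe

namespace FLe

section Aux

set_option linter.unusedSectionVars false

variable {X : Type u} [FLeChain X]

theorem fres {x y z : X} : x * y ≤ z ↔ y ≤ imp x z := FLeChain.residuation x y z

theorem mul_imp_le (x y : X) : x * imp x y ≤ y := fres.mpr le_rfl

theorem fmul_le_left {a b : X} (hab : a ≤ b) (c : X) : c * a ≤ c * b :=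
  fres.mpr (hab.trans (fres.mp (le_refl (c * b))))

theorem fmul_le_right {a b : X} (hab : a ≤ b) (c : X) : a * c ≤ b * c := by
  rw [mul_comm a c, mul_comm b c]; exact fmul_le_left hab c

theorem one_le_imp_self (x : X) : (1 : X) ≤ imp x x := fres.mp (by rw [mul_one])

theorem imp_le_imp {b c : X} (a : X) (hbc : b ≤ c) : imp a b ≤ imp a c :=
  fres.mp ((mul_imp_le a b).trans hbc)

theorem imp_mul (a b c : X) : imp (a * b) c = imp b (imp a c) := by
  apply le_antisymm
  · apply fres.mp; apply fres.mp
    calc a * (b * imp (a * b) c) = (a * b) * imp (a * b) c := by rw [mul_assoc]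
      _ ≤ c := mul_imp_le _ _
  · apply fres.mp
    calc (a * b) * imp b (imp a c) = a * (b * imp b (imp a c)) := by rw [mul_assoc]
      _ ≤ a * imp a c := fmul_le_left (mul_imp_le _ _) a
      _ ≤ c := mul_imp_le _ _

theorem fcompl_mul (a b : X) : compl (a * b) = imp b (compl a) := imp_mul a b _

theorem le_fcompl_iff {a b : X} : b ≤ compl a ↔ a * b ≤ fc X := fres.symm

theorem mul_fcompl_le (a : X) : a * compl a ≤ fc X := mul_imp_le a (fc X)

theorem fcompl_antitone {a b : X} (hab : a ≤ b) : compl b ≤ compl a :=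
  fres.mp ((fmul_le_right hab (compl b)).trans (mul_fcompl_le b))

section Invol

variable (hI : Involutive X)
include hI

theorem fcompl_lt {a b : X} (hab : a < b) : compl b < compl a :=
  lt_of_le_of_ne (fcompl_antitone hab.le)
    (fun he => hab.ne (by rw [← hI a, ← hI b, he]))

theorem imp_eq_compl (a b : X) : imp a b = compl (a * compl b) := by
  apply le_antisymm
  · apply le_fcompl_iff.mpr
    calc (a * compl b) * imp a b = compl b * (a * imp a b) := by
          rw [mul_comm a (compl b), mul_assoc]
      _ ≤ compl b * b := fmul_le_left (mul_imp_le a b) _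
      _ = b * compl b := mul_comm _ _
      _ ≤ fc X := mul_fcompl_le b
  · apply fres.mp
    have h1 : (a * compl (a * compl b)) * compl b ≤ fc X := by
      calc (a * compl (a * compl b)) * compl b
          = (a * compl b) * compl (a * compl b) := mul_right_comm a _ _
        _ ≤ fc X := mul_fcompl_le _
    have h2 : compl b ≤ compl (a * compl (a * compl b)) := le_fcompl_iff.mpr h1
    have h3 := fcompl_antitone h2
    rwa [hI b, hI (a * compl (a * compl b))] at h3

theorem mul_compl_layer {x uu : X} (hx : imp x x = uu) : x * compl x = compl uu := by
  have h1 : compl (x * compl x) = uu := by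
    rw [mul_comm, fcompl_mul, hI, hx]
  rw [← hI (x * compl x), h1]

end Invol

section OE

variable (h : OddEven X)
include h

theorem fcompl_one : compl (1 : X) = fc X := by
  apply le_antisymm
  · have h2 := mul_imp_le (1 : X) (fc X); rwa [one_mul] at h2
  · exact fres.mp (by rw [one_mul])

theorem f_le_one : fc X ≤ (1 : X) := by
  rcases h.2 with ho | he
  · exact le_of_eq (by rw [← fcompl_one h, ho])
  · exact ((he (fc X)).mpr le_rfl).le

theorem one_le_of_not_le_f {a : X} (ha : ¬ a ≤ fc X) : (1 : X) ≤ a := by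
  rcases h.2 with ho | he
  · have hf : fc X = (1 : X) := by rw [← fcompl_one h, ho]
    rw [hf] at ha; exact (not_le.mp ha).le
  · exact not_lt.mp (fun hl => ha ((he a).mp hl))

theorem fcompl_le_f {uu : X} (h1 : (1 : X) ≤ uu) : compl uu ≤ fc X := by
  calc compl uu = 1 * compl uu := (one_mul _).symm
    _ ≤ uu * compl uu := fmul_le_right h1 _
    _ ≤ fc X := mul_fcompl_le uu

theorem fcompl_le_one {uu : X} (h1 : (1 : X) ≤ uu) : compl uu ≤ 1 :=
  (fcompl_le_f h h1).trans (f_le_one h)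

end OE

theorem layer_absorb {x uu : X} (hx : imp x x = uu) : x * uu = x := by
  apply le_antisymm
  · rw [← hx]; exact mul_imp_le x x
  · calc x = x * 1 := (mul_one x).symm
      _ ≤ x * uu := fmul_le_left (hx ▸ one_le_imp_self x) x

theorem one_le_layer {x uu : X} (hx : imp x x = uu) : (1 : X) ≤ uu :=
  hx ▸ one_le_imp_self x

theorem idem_absorb {a b : X} (h1 : (1 : X) ≤ a) (hid : IsIdem b) (hab : a ≤ b) :
    b * a = b := by
  apply le_antisymm
  · exact (fmul_le_left hab b).trans (le_of_eq hid)
  · calc b = b * 1 := (mul_one b).symm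
      _ ≤ b * a := fmul_le_left h1 b

theorem absorb_imp {uu c : X} (h1 : (1 : X) ≤ uu) (hid : IsIdem uu) :
    uu * imp c uu = imp c uu := by
  have hid' : uu * uu = uu := hid
  apply le_antisymm
  · apply fres.mp
    calc c * (uu * imp c uu) = uu * (c * imp c uu) := by
          rw [← mul_assoc, mul_comm c uu, mul_assoc]
      _ ≤ uu * uu := fmul_le_left (mul_imp_le c uu) uu
      _ = uu := hid'
  · calc imp c uu = 1 * imp c uu := (one_mul _).symm
      _ ≤ uu * imp c uu := fmul_le_right h1 _

/-- Key lemma F: for `1 ≤ u < v` with `v` idempotent, `v → u = v'` and `u' * v = v`. -/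
theorem claimF {uu vv : X} (h : OddEven X) (h1u : (1 : X) ≤ uu)
    (hvid : vv * vv = vv) (huv : uu < vv) :
    imp vv uu = compl vv ∧ compl uu * vv = vv := by
  have hI := h.1
  have hyu : vv * imp vv uu ≤ uu := mul_imp_le vv uu
  have hvy : vv * (vv * imp vv uu) = vv * imp vv uu := by
    rw [← mul_assoc, hvid]
  have hyf : vv * imp vv uu ≤ fc X := by
    by_contra hc
    have h1y := one_le_of_not_le_f h hc
    have hvu2 : vv ≤ uu := by
      calc vv = vv * 1 := (mul_one vv).symm
        _ ≤ vv * (vv * imp vv uu) := fmul_le_left h1y vv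
        _ = vv * imp vv uu := hvy
        _ ≤ uu := hyu
    exact absurd hvu2 (not_le.mpr huv)
  have hgc : imp vv uu ≤ compl vv := fres.mp hyf
  have hcg : compl vv ≤ imp vv uu :=
    fres.mp ((mul_fcompl_le vv).trans ((f_le_one h).trans h1u))
  have hpart1 : imp vv uu = compl vv := le_antisymm hgc hcg
  have hc2 : compl (compl uu * vv) = compl vv := by
    rw [fcompl_mul, hI, hpart1]
  refine ⟨hpart1, ?_⟩
  calc compl uu * vv = compl (compl (compl uu * vv)) := (hI _).symm
    _ = compl (compl vv) := by rw [hc2]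
    _ = vv := hI vv

/-- Key lemma A: if `x ∈ L_u` and `u ≤ v ∈ κ` then `v*x ∈ L_v`. -/
theorem claimA {uu vv x : X} (h : OddEven X) (hx : imp x x = uu)
    (hv : vv ∈ kappa X) (huv : uu ≤ vv) :
    imp (vv * x) (vv * x) = vv := by
  have hI := h.1
  have h1u : (1 : X) ≤ uu := one_le_layer hx
  have hvidem : vv * vv = vv := hv.2
  have hvs : vv ≤ imp (vv * x) (vv * x) :=
    fres.mp (le_of_eq (by rw [mul_right_comm, hvidem]))
  have h1s : (1 : X) ≤ imp (vv * x) (vv * x) := le_trans hv.1 hvs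
  have hsid : imp (vv * x) (vv * x) * imp (vv * x) (vv * x) = imp (vv * x) (vv * x) := by
    apply le_antisymm
    · apply fres.mp
      calc (vv * x) * (imp (vv * x) (vv * x) * imp (vv * x) (vv * x))
          = ((vv * x) * imp (vv * x) (vv * x)) * imp (vv * x) (vv * x) := by
            rw [← mul_assoc]
        _ ≤ (vv * x) * imp (vv * x) (vv * x) := fmul_le_right (mul_imp_le _ _) _
        _ ≤ vv * x := mul_imp_le _ _
    · calc imp (vv * x) (vv * x) = imp (vv * x) (vv * x) * 1 := (mul_one _).symm
        _ ≤ imp (vv * x) (vv * x) * imp (vv * x) (vv * x) := fmul_le_left h1s _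
  have hsx : imp (vv * x) (vv * x) * x = vv * x := by
    apply le_antisymm
    · calc imp (vv * x) (vv * x) * x
          = (imp (vv * x) (vv * x) * x) * 1 := (mul_one _).symm
        _ ≤ (imp (vv * x) (vv * x) * x) * vv := fmul_le_left hv.1 _
        _ = (vv * x) * imp (vv * x) (vv * x) := by
            rw [mul_assoc, mul_comm x vv, mul_comm (imp (vv * x) (vv * x)) (vv * x)]
        _ ≤ vv * x := mul_imp_le _ _
    · exact fmul_le_right hvs x
  have hscompl : imp (vv * x) (vv * x) * compl uu = vv * compl uu := by
    calc imp (vv * x) (vv * x) * compl uu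
        = imp (vv * x) (vv * x) * (x * compl x) := by rw [mul_compl_layer hI hx]
      _ = (imp (vv * x) (vv * x) * x) * compl x := by rw [mul_assoc]
      _ = (vv * x) * compl x := by rw [hsx]
      _ = vv * (x * compl x) := by rw [mul_assoc]
      _ = vv * compl uu := by rw [mul_compl_layer hI hx]
  rcases lt_or_ge uu (imp (vv * x) (vv * x)) with hus | hsle
  · have hF := (claimF h h1u hsid hus).2
    have hle : imp (vv * x) (vv * x) ≤ vv := by
      calc imp (vv * x) (vv * x) = compl uu * imp (vv * x) (vv * x) := hF.symm
        _ = imp (vv * x) (vv * x) * compl uu := mul_comm _ _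
        _ = vv * compl uu := hscompl
        _ = compl uu * vv := mul_comm _ _
        _ ≤ 1 * vv := fmul_le_right (fcompl_le_one h h1u) vv
        _ = vv := one_mul vv
    exact le_antisymm hle hvs
  · exact le_antisymm (hsle.trans huv) hvs

/-- Key lemma M: a layer element strictly moved by the complement of its unit
is invertible at that unit. -/
theorem claimM {vv x : X} (h : OddEven X) (hx : imp x x = vv)
    (hlt : x * compl vv < x) : x * imp x vv = vv := by
  have hI := h.1
  have hstrict : compl x < imp x vv := by
    have h2 := fcompl_lt hI hlt
    rwa [← imp_eq_compl hI x vv] at h2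
  have hef : ¬ (x * imp x vv ≤ fc X) := by
    intro hef
    exact absurd (fres.mp hef : imp x vv ≤ compl x) (not_le.mpr hstrict)
  have h1e : (1 : X) ≤ x * imp x vv := one_le_of_not_le_f h hef
  apply le_antisymm (mul_imp_le x vv)
  calc vv = 1 * vv := (one_mul vv).symm
    _ ≤ (x * imp x vv) * vv := fmul_le_right h1e vv
    _ = (x * vv) * imp x vv := mul_right_comm x _ vv
    _ = x * imp x vv := by rw [layer_absorb hx]

/-- Strictness: for `u < v` in `κ` and `x ∈ L_u`, `(v*x)*v' < v*x`. -/
theorem claimE8 {uu vv x : X} (h : OddEven X) (hu : uu ∈ kappa X)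
    (hv : vv ∈ kappa X) (huv : uu < vv) (hx : imp x x = uu) :
    (vv * x) * compl vv < vv * x := by
  have hI := h.1
  have hvidem : vv * vv = vv := hv.2
  have hF := (claimF h hu.1 hvidem huv).2
  have hle : (vv * x) * compl vv ≤ vv * x := by
    calc (vv * x) * compl vv ≤ (vv * x) * 1 := fmul_le_left (fcompl_le_one h hv.1) _
      _ = vv * x := mul_one _
  apply lt_of_le_of_ne hle
  intro hEq
  have hc1 : imp (vv * x) vv = imp x (compl vv) := by
    have hc := congrArg compl hEq
    have hl : compl ((vv * x) * compl vv) = imp (vv * x) vv := by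
      rw [mul_comm (vv * x) (compl vv), fcompl_mul, hI]
    have hr : compl (vv * x) = imp x (compl vv) := fcompl_mul vv x
    rw [hl, hr] at hc
    exact hc
  have hstep : compl x * vv ≤ imp (vv * x) vv := by
    apply fres.mp
    calc (vv * x) * (compl x * vv) = (x * vv) * (compl x * vv) := by rw [mul_comm vv x]
      _ = (x * compl x) * (vv * vv) := mul_mul_mul_comm x vv (compl x) vv
      _ = compl uu * vv := by rw [mul_compl_layer hI hx, hvidem]
      _ ≤ vv := le_of_eq hF
  rw [hc1] at hstep
  have hfin : x * (compl x * vv) ≤ compl vv := fres.mpr hstep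
  have hveq : x * (compl x * vv) = vv := by
    rw [← mul_assoc, mul_compl_layer hI hx, hF]
  rw [hveq] at hfin
  have hbad : vv < vv := by
    calc vv ≤ compl vv := hfin
      _ ≤ fc X := fcompl_le_f h hv.1
      _ ≤ 1 := f_le_one h
      _ ≤ uu := hu.1
      _ < vv := huv
  exact absurd hbad (lt_irrefl vv)

/-- Invertibility of `v*x` at level `v`, for `x ∈ L_u`, `u < v`. -/
theorem claimV {uu vv x : X} (h : OddEven X) (hu : uu ∈ kappa X)
    (hv : vv ∈ kappa X) (huv : uu < vv) (hx : imp x x = uu) :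
    (vv * x) * imp (vv * x) vv = vv :=
  claimM h (claimA h hx hv huv.le) (claimE8 h hu hv huv hx)

/-- `(4)` core: `v * (x → u) = (v*x) → v` for `x ∈ L_u`, `u < v`. -/
theorem fourCore {uu vv x : X} (h : OddEven X) (hu : uu ∈ kappa X)
    (hv : vv ∈ kappa X) (huv : uu < vv) (hx : imp x x = uu) :
    vv * imp x uu = imp (vv * x) vv := by
  have hI := h.1
  have hvidem : vv * vv = vv := hv.2
  have hVb : (vv * x) * imp (vv * x) vv = vv := claimV h hu hv huv hx
  have hcompl_le : compl x ≤ imp x uu :=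
    imp_le_imp x ((f_le_one h).trans hu.1)
  have hcu_le_e : compl uu ≤ x * imp x uu := by
    rw [← mul_compl_layer hI hx]; exact fmul_le_left hcompl_le x
  have hvu : vv * uu = vv := idem_absorb hu.1 hv.2 huv.le
  have hve : vv * (x * imp x uu) = vv := by
    apply le_antisymm
    · calc vv * (x * imp x uu) ≤ vv * uu := fmul_le_left (mul_imp_le x uu) vv
        _ = vv := hvu
    · calc vv = compl uu * vv := ((claimF h hu.1 hvidem huv).2).symm
        _ ≤ (x * imp x uu) * vv := fmul_le_right hcu_le_e vv
        _ = vv * (x * imp x uu) := mul_comm _ _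
  have hbsv : imp (vv * x) vv * vv = imp (vv * x) vv := by
    apply le_antisymm
    · apply fres.mp
      calc (vv * x) * (imp (vv * x) vv * vv)
          = ((vv * x) * imp (vv * x) vv) * vv := by rw [← mul_assoc]
        _ ≤ vv * vv := fmul_le_right (mul_imp_le _ _) vv
        _ = vv := hvidem
    · calc imp (vv * x) vv = imp (vv * x) vv * 1 := (mul_one _).symm
        _ ≤ imp (vv * x) vv * vv := fmul_le_left hv.1 _
  calc vv * imp x uu = ((vv * x) * imp (vv * x) vv) * imp x uu := by rw [hVb]
    _ = imp (vv * x) vv * (vv * (x * imp x uu)) := by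
        rw [mul_comm (vv * x) (imp (vv * x) vv), mul_assoc, mul_assoc]
    _ = imp (vv * x) vv * vv := by rw [hve]
    _ = imp (vv * x) vv := hbsv

/-- Layers are closed under multiplication. -/
theorem claimL {uu x y : X} (h : OddEven X) (hx : imp x x = uu)
    (hy : imp y y = uu) : imp (x * y) (x * y) = uu := by
  have hI := h.1
  have h1u : (1 : X) ≤ uu := one_le_layer hx
  have huw : uu ≤ imp (x * y) (x * y) :=
    fres.mp (le_of_eq (by rw [mul_assoc, layer_absorb hy]))
  have h1w : (1 : X) ≤ imp (x * y) (x * y) := h1u.trans huw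
  have hwid : imp (x * y) (x * y) * imp (x * y) (x * y) = imp (x * y) (x * y) := by
    apply le_antisymm
    · apply fres.mp
      calc (x * y) * (imp (x * y) (x * y) * imp (x * y) (x * y))
          = ((x * y) * imp (x * y) (x * y)) * imp (x * y) (x * y) := by rw [← mul_assoc]
        _ ≤ (x * y) * imp (x * y) (x * y) := fmul_le_right (mul_imp_le _ _) _
        _ ≤ x * y := mul_imp_le _ _
    · calc imp (x * y) (x * y) = imp (x * y) (x * y) * 1 := (mul_one _).symm
        _ ≤ imp (x * y) (x * y) * imp (x * y) (x * y) := fmul_le_left h1w _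
  rcases lt_or_ge uu (imp (x * y) (x * y)) with huw2 | hwle
  · exfalso
    have habs : (x * y) * imp (x * y) (x * y) = x * y :=
      le_antisymm (mul_imp_le _ _)
        (by calc x * y = (x * y) * 1 := (mul_one _).symm
              _ ≤ (x * y) * imp (x * y) (x * y) := fmul_le_left h1w _)
    have key1 : (compl uu * compl uu) * imp (x * y) (x * y) = compl uu * compl uu := by
      calc (compl uu * compl uu) * imp (x * y) (x * y)
          = ((x * compl x) * (y * compl y)) * imp (x * y) (x * y) := by
            rw [mul_compl_layer hI hx, mul_compl_layer hI hy]
        _ = ((x * y) * (compl x * compl y)) * imp (x * y) (x * y) := by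
            rw [mul_mul_mul_comm]
        _ = ((x * y) * imp (x * y) (x * y)) * (compl x * compl y) :=
            mul_right_comm (x * y) (compl x * compl y) (imp (x * y) (x * y))
        _ = (x * y) * (compl x * compl y) := by rw [habs]
        _ = (x * compl x) * (y * compl y) := (mul_mul_mul_comm x (compl x) y (compl y)).symm
        _ = compl uu * compl uu := by
            rw [mul_compl_layer hI hx, mul_compl_layer hI hy]
    have hF := (claimF h h1u hwid huw2).2
    have key2 : (compl uu * compl uu) * imp (x * y) (x * y) = imp (x * y) (x * y) := by
      rw [mul_assoc, hF, hF]
    have hwsmall : imp (x * y) (x * y) ≤ uu := by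
      calc imp (x * y) (x * y) = compl uu * compl uu := by rw [← key2, key1]
        _ ≤ 1 * compl uu := fmul_le_right (fcompl_le_one h h1u) _
        _ = compl uu := one_mul _
        _ ≤ fc X := fcompl_le_f h h1u
        _ ≤ 1 := f_le_one h
        _ ≤ uu := h1u
    exact absurd hwsmall (not_le.mpr huw2)
  · exact le_antisymm hwle huw

/-- An invertible element is closed: `((b→v)→v) = b`. -/
theorem inv_closed {vv b : X} (h1v : (1 : X) ≤ vv) (hb : b * imp b vv = vv)
    (hvb : b * vv = b) : imp (imp b vv) vv = b := by
  apply le_antisymm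
  · calc imp (imp b vv) vv = imp (imp b vv) vv * 1 := (mul_one _).symm
      _ ≤ imp (imp b vv) vv * vv := fmul_le_left h1v _
      _ = imp (imp b vv) vv * (b * imp b vv) := by rw [hb]
      _ = (imp b vv * imp (imp b vv) vv) * b := by
          rw [mul_comm b (imp b vv), ← mul_assoc,
            mul_comm (imp (imp b vv) vv) (imp b vv)]
      _ ≤ vv * b := fmul_le_right (mul_imp_le _ _) b
      _ = b * vv := mul_comm _ _
      _ = b := hvb
  · exact fres.mp (le_of_eq (by rw [mul_comm]; exact hb))

end Aux

end FLe


open FLe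

/-- For positive idempotents `u ≤ v` of an odd or even involutive FL_e-chain,
the transition `ς_{u→v}(x) = v·x` maps `G_u` into `G_v` and is an o-group homomorphism
from the layer group `G_u` to the layer group `G_v` (it preserves units, products,
inverses and order); moreover `ς_{u→u}` is the identity on `G_u`,
`ς_{v→w} ∘ ς_{u→v} = ς_{u→w}` for `u ≤ v ≤ w`, and if `u < v` and `v'` is idempotent
then `ς_{u→v}` maps `G_u` into `H_v`. -/
theorem transition_ogroup_hom {X : Type u} [FLeChain X] (h : OddEven X)
    (u v : X) (hu : u ∈ kappa X) (hv : v ∈ kappa X) (huv : u ≤ v) :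
    -- maps G_u into G_v
    (∀ x ∈ Gs u, v * x ∈ Gs v) ∧
    -- preserves the unit
    v * u = v ∧
    -- preserves products
    (∀ x ∈ Gs u, ∀ y ∈ Gs u, v * gmul u x y = gmul v (v * x) (v * y)) ∧
    -- preserves inverses
    (∀ x ∈ Gs u, v * ginv u x = ginv v (v * x)) ∧
    -- preserves the order
    (∀ x ∈ Gs u, ∀ y ∈ Gs u, x ≤ y → v * x ≤ v * y) ∧
    -- ς_{u→u} is the identity on G_u
    (∀ x ∈ Gs u, u * x = x) ∧
    -- ς_{v→w} ∘ ς_{u→v} = ς_{u→w}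
    (∀ w ∈ kappa X, v ≤ w → ∀ x ∈ Gs u, w * (v * x) = w * x) ∧
    -- if u < v and v' is idempotent then ς_{u→v} maps G_u into H_v
    (u < v → IsIdem (compl v) → ∀ x ∈ Gs u, v * x ∈ Hs v) := by
  have hvu : v * u = v := idem_absorb hu.1 hv.2 huv
  refine ⟨?_, hvu, ?_, ?_, ?_, ?_, ?_, ?_⟩
  · -- maps G_u into G_v
    intro x hx
    rcases eq_or_lt_of_le huv with heq | hlt
    · subst heq
      have hux : u * x = x := by rw [mul_comm]; exact layer_absorb hx.1
      rw [hux]; exact hx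
    · refine ⟨claimA h hx.1 hv huv, fun hKIv hmem => ?_⟩
      simp only [dotH, Set.mem_image] at hmem
      obtain ⟨y, hyH, hyEq⟩ := hmem
      have hid : compl v * compl v = compl v := hKIv.2.1
      have hfix : (v * x) * compl v = v * x := by
        rw [← hyEq, mul_assoc, hid]
      exact (claimE8 h hu hv hlt hx.1).ne hfix
  · -- preserves products
    intro x hx y hy
    rcases eq_or_lt_of_le huv with heq | hlt
    · subst heq
      have hux : u * x = x := by rw [mul_comm]; exact layer_absorb hx.1
      have huy : u * y = y := by rw [mul_comm]; exact layer_absorb hy.1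
      rw [hux, huy]
      by_cases hKI : inKI u
      · simp only [gmul]; rw [if_pos hKI]
        exact absorb_imp hu.1 hu.2
      · simp only [gmul]; rw [if_neg hKI, ← mul_assoc, mul_comm u x, layer_absorb hx.1]
    · have ha : imp (x * y) (x * y) = u := claimL h hx.1 hy.1
      have hbl : imp (v * (x * y)) (v * (x * y)) = v := claimA h ha hv huv
      have hbv : (v * (x * y)) * v = v * (x * y) := layer_absorb hbl
      have hVb : (v * (x * y)) * imp (v * (x * y)) v = v := claimV h hu hv hlt ha
      have hvxvy : (v * x) * (v * y) = v * (x * y) := by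
        rw [mul_mul_mul_comm, hv.2]
      have hRHS : gmul v (v * x) (v * y) = v * (x * y) := by
        by_cases hKIv : inKI v
        · simp only [gmul]; rw [if_pos hKIv, hvxvy]
          exact inv_closed hv.1 hVb hbv
        · simp only [gmul]; rw [if_neg hKIv]; exact hvxvy
      have hLHS : v * gmul u x y = v * (x * y) := by
        by_cases hKIu : inKI u
        · simp only [gmul]; rw [if_pos hKIu]
          have hcl_ge : x * y ≤ imp (imp (x * y) u) u :=
            fres.mp (by rw [mul_comm]; exact mul_imp_le (x * y) u)
          have h4 : v * imp (x * y) u = imp (v * (x * y)) v := fourCore h hu hv hlt ha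
          have hclb : imp (imp (x * y) u) u * imp (v * (x * y)) v ≤ v := by
            rw [← h4]
            calc imp (imp (x * y) u) u * (v * imp (x * y) u)
                = v * (imp (x * y) u * imp (imp (x * y) u) u) := by
                  rw [mul_comm (imp (imp (x * y) u) u) (v * imp (x * y) u), mul_assoc]
              _ ≤ v * u := fmul_le_left (mul_imp_le _ _) v
              _ = v := hvu
          have e1 : imp (imp (x * y) u) u * v
              = (imp (imp (x * y) u) u * imp (v * (x * y)) v) * (v * (x * y)) := by
            conv_lhs => rw [← hVb]
            rw [mul_comm (v * (x * y)) (imp (v * (x * y)) v), ← mul_assoc]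
          have hle1 : v * imp (imp (x * y) u) u ≤ v * (x * y) := by
            calc v * imp (imp (x * y) u) u = imp (imp (x * y) u) u * v := mul_comm _ _
              _ = (imp (imp (x * y) u) u * imp (v * (x * y)) v) * (v * (x * y)) := e1
              _ ≤ v * (v * (x * y)) := fmul_le_right hclb _
              _ = (v * v) * (x * y) := (mul_assoc v v (x * y)).symm
              _ = v * (x * y) := by rw [hv.2]
          exact le_antisymm hle1 (fmul_le_left hcl_ge v)
        · simp only [gmul]; rw [if_neg hKIu]
      rw [hLHS, hRHS]
  · -- preserves inverses
    intro x hx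
    rcases eq_or_lt_of_le huv with heq | hlt
    · subst heq
      show u * imp x u = imp (u * x) u
      have hux : u * x = x := by rw [mul_comm]; exact layer_absorb hx.1
      rw [hux]
      exact absorb_imp hu.1 hu.2
    · exact fourCore h hu hv hlt hx.1
  · -- preserves the order
    intro x _ y _ hxy
    exact fmul_le_left hxy v
  · -- identity
    intro x hx
    rw [mul_comm]; exact layer_absorb hx.1
  · -- composition
    intro w hw hvw x _
    rw [← mul_assoc, idem_absorb hv.1 hw.2 hvw]
  · -- into H_v
    intro hlt hidc x hx
    exact ⟨claimA h hx.1 hv huv, claimE8 h hu hv hlt hx.1⟩
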